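/- arXiv:2410.03242 — 7 statements merged into one kernel-verified Lean document; each statement's English description precedes it below -/
import Mathlib

section
/- For all real numbers X, Y and all pairs of integers (m, n) ≠ (0, 0), |mX + nY| + |nX - mY| ≥ |X| + |Y|. -/
lemma int_abs_le_sq_cast (m : ℤ) : |(m : ℝ)| ≤ (m : ℝ)^2 := by
  have h : |m| ≤ m^2 := by
    rcases eq_or_ne m 0 with rfl | hm
    · simp
    · have h1 : 1 ≤ |m| := Int.one_le_abs hm
      calc |m| = |m| * 1 := by ring
        _ ≤ |m| * |m| := by
            exact mul_le_mul_of_nonneg_left h1 (abs_nonneg m)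
        _ = m^2 := by rw [← abs_mul, ← sq, abs_sq]
  calc |(m : ℝ)| = ((|m| : ℤ) : ℝ) := by push_cast; ring
    _ ≤ ((m^2 : ℤ) : ℝ) := by exact_mod_cast h
    _ = (m : ℝ)^2 := by push_cast; ring

theorem abs_int_comb_ge (X Y : ℝ) (m n : ℤ) (h : (m, n) ≠ (0, 0)) :
    |(m : ℝ) * X + (n : ℝ) * Y| + |(n : ℝ) * X - (m : ℝ) * Y| ≥ |X| + |Y| := by
  set a : ℝ := (m : ℝ) with ha
  set b : ℝ := (n : ℝ) with hb
  set A := |a * X + b * Y| with hA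
  set B := |b * X - a * Y| with hB
  have hsq : (0:ℝ) ≤ a^2 + b^2 := by positivity
  have hX : (a^2 + b^2) * |X| ≤ |a| * A + |b| * B := by
    have e : (a^2 + b^2) * |X| = |a * (a * X + b * Y) + b * (b * X - a * Y)| := by
      rw [show a * (a * X + b * Y) + b * (b * X - a * Y) = (a^2 + b^2) * X by ring,
        abs_mul, abs_of_nonneg hsq]
    rw [e]
    calc |a * (a * X + b * Y) + b * (b * X - a * Y)|
        ≤ |a * (a * X + b * Y)| + |b * (b * X - a * Y)| := abs_add_le _ _
      _ = |a| * A + |b| * B := by rw [abs_mul, abs_mul]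
  have hY : (a^2 + b^2) * |Y| ≤ |a| * B + |b| * A := by
    have e : (a^2 + b^2) * |Y| = |b * (a * X + b * Y) - a * (b * X - a * Y)| := by
      rw [show b * (a * X + b * Y) - a * (b * X - a * Y) = (a^2 + b^2) * Y by ring,
        abs_mul, abs_of_nonneg hsq]
    rw [e]
    calc |b * (a * X + b * Y) - a * (b * X - a * Y)|
        ≤ |b * (a * X + b * Y)| + |a * (b * X - a * Y)| := abs_sub _ _
      _ = |a| * B + |b| * A := by rw [abs_mul, abs_mul]; ring
  have ha2 : |a| ≤ a^2 := int_abs_le_sq_cast m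
  have hb2 : |b| ≤ b^2 := int_abs_le_sq_cast n
  have hpos : 0 < a^2 + b^2 := by
    rcases (not_and_or.mp (by simpa [Prod.ext_iff] using h)) with hm | hn
    · have h0 : a ≠ 0 := by simpa [ha] using (Int.cast_ne_zero (α := ℝ)).mpr hm
      positivity
    · have h0 : b ≠ 0 := by simpa [hb] using (Int.cast_ne_zero (α := ℝ)).mpr hn
      positivity
  have hAnn : 0 ≤ A := abs_nonneg _
  have hBnn : 0 ≤ B := abs_nonneg _
  have hABnn : 0 ≤ A + B := by linarith
  have key : (a^2 + b^2) * (|X| + |Y|) ≤ (a^2 + b^2) * (A + B) := by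
    calc (a^2 + b^2) * (|X| + |Y|) ≤ (|a| + |b|) * (A + B) := by nlinarith
      _ ≤ (a^2 + b^2) * (A + B) := by nlinarith
  have := le_of_mul_le_mul_left (by linarith : (a^2 + b^2) * (|X| + |Y|) ≤ (a^2 + b^2) * (A + B)) hpos
  linarith
end

section
/- Let Z be a real number with 0 ≤ Z ≤ 1, and let m, n be integers, not both zero. Then |m + nZ| + |n - mZ| ≥ 1 + Z. -/
theorem abs_int_comb_Z_ge (Z : ℝ) (hZ0 : 0 ≤ Z) (hZ1 : Z ≤ 1) (m n : ℤ)
    (h : (m, n) ≠ (0, 0)) :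
    |(m : ℝ) + (n : ℝ) * Z| + |(n : ℝ) - (m : ℝ) * Z| ≥ 1 + Z := by
  rcases eq_or_ne m 0 with hm | hm
  · rcases eq_or_ne n 0 with hn | hn
    · exact absurd (by rw [hm, hn]) h
    · have hn1 : (1:ℝ) ≤ |(n:ℝ)| := by
        have := Int.one_le_abs hn
        calc (1:ℝ) ≤ |(n:ℤ)| := by exact_mod_cast this
          _ = |(n:ℝ)| := by rw [Int.cast_abs]
      subst hm
      simp only [Int.cast_zero, zero_add, zero_mul, sub_zero]
      rw [abs_mul, abs_of_nonneg hZ0]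
      nlinarith [abs_nonneg ((n:ℝ))]
  · rcases eq_or_ne n 0 with hn | hn
    · have hm1 : (1:ℝ) ≤ |(m:ℝ)| := by
        have := Int.one_le_abs hm
        calc (1:ℝ) ≤ |(m:ℤ)| := by exact_mod_cast this
          _ = |(m:ℝ)| := by rw [Int.cast_abs]
      subst hn
      simp only [Int.cast_zero, zero_mul, add_zero, zero_sub, abs_neg]
      rw [abs_mul, abs_of_nonneg hZ0]
      nlinarith [abs_nonneg ((m:ℝ))]
    · have hm1 : (1:ℝ) ≤ |(m:ℝ)| := by
        have := Int.one_le_abs hm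
        calc (1:ℝ) ≤ |(m:ℤ)| := by exact_mod_cast this
          _ = |(m:ℝ)| := by rw [Int.cast_abs]
      have hn1 : (1:ℝ) ≤ |(n:ℝ)| := by
        have := Int.one_le_abs hn
        calc (1:ℝ) ≤ |(n:ℤ)| := by exact_mod_cast this
          _ = |(n:ℝ)| := by rw [Int.cast_abs]
      have key1 : |(m:ℝ)| * (1 + Z^2) ≤
          |(m:ℝ) + n * Z| + Z * |(n:ℝ) - m * Z| := by
        calc |(m:ℝ)| * (1 + Z^2) = |(m:ℝ) * (1 + Z^2)| := by
              rw [abs_mul]; congr 1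
              exact (abs_of_pos (by positivity)).symm
          _ = |((m:ℝ) + n * Z) - Z * ((n:ℝ) - m * Z)| := by ring_nf
          _ ≤ |(m:ℝ) + n * Z| + |Z * ((n:ℝ) - m * Z)| := abs_sub _ _
          _ = |(m:ℝ) + n * Z| + Z * |(n:ℝ) - m * Z| := by
              rw [abs_mul, abs_of_nonneg hZ0]
      have key2 : |(n:ℝ)| * (1 + Z^2) ≤
          Z * |(m:ℝ) + n * Z| + |(n:ℝ) - m * Z| := by
        calc |(n:ℝ)| * (1 + Z^2) = |(n:ℝ) * (1 + Z^2)| := by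
              rw [abs_mul]; congr 1
              exact (abs_of_pos (by positivity)).symm
          _ = |Z * ((m:ℝ) + n * Z) + ((n:ℝ) - m * Z)| := by ring_nf
          _ ≤ |Z * ((m:ℝ) + n * Z)| + |(n:ℝ) - m * Z| := abs_add_le _ _
          _ = Z * |(m:ℝ) + n * Z| + |(n:ℝ) - m * Z| := by
              rw [abs_mul, abs_of_nonneg hZ0]
      nlinarith [abs_nonneg ((m:ℝ) + n * Z), abs_nonneg ((n:ℝ) - m * Z),
        sq_nonneg (1 - Z)]
end

section
/- Let L be a real Galois quartic extension of ℚ with Galois group isomorphic to the Klein four-group, with quadratic subfields ℚ(√d₁), ℚ(√d₂), ℚ(√d₃), and let u₁, u₂, u₃ > 1 be the fundamental units of these quadratic fields. Then u₁, u₂, u₃ are multiplicatively independent: if u₁^{m₁} u₂^{m₂} u₃^{m₃} = 1 for integers m₁, m₂, m₃, then m₁ = m₂ = m₃ = 0. -/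
/-!
Let `σᵢ` be the non-trivial automorphism of `L` fixing `ℚ(√dᵢ)`. Since the three quadratic
subfields correspond to the three subgroups of order two of the Galois group, `σᵢ` restricts to
the conjugation of the other two quadratic fields, so for `j ≠ i` the product `uⱼ σᵢ(uⱼ)` is the
norm of the unit `uⱼ`, i.e. `±1`. Applying `σᵢ` to `u₁^m₁ u₂^m₂ u₃^m₃ = 1` and multiplying by the
original relation leaves `uᵢ^(2mᵢ) = ±1`, which forces `mᵢ = 0` because `uᵢ > 1`.
-/

open NumberField IntermediateField Module

theorem Subgroup.eq_zpowers_of_card_eq_prime {G : Type*} [Group G] {p : ℕ} [Fact p.Prime]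
    {H : Subgroup G} (hH : Nat.card H = p) {g : G} (hg : g ∈ H) (hg1 : g ≠ 1) :
    H = zpowers g := by
  refine le_antisymm (fun x hx => ?_) (zpowers_le.mpr hg)
  obtain ⟨k, hk⟩ := mem_zpowers_iff.mp <|
    mem_zpowers_of_prime_card hH (g := ⟨g, hg⟩) (g' := ⟨x, hx⟩) (by simpa using hg1)
  exact ⟨k, by simpa using congrArg Subtype.val hk⟩

theorem IsGalois.exists_mem_fixingSubgroup_forall_notMem {F L : Type*} [Field F] [Field L]
    [Algebra F L] [FiniteDimensional F L] [hGal : IsGalois F L] {p : ℕ} [hp : Fact p.Prime]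
    {K : IntermediateField F L} (hK : finrank K L = p) :
    ∃ σ ∈ K.fixingSubgroup, ∀ K' : IntermediateField F L, finrank K' L = p → K' ≠ K →
      σ ∉ K'.fixingSubgroup := by
  have hcard {K' : IntermediateField F L} (hK' : finrank K' L = p) :
      Nat.card K'.fixingSubgroup = p :=
    (card_fixingSubgroup_eq_finrank K').trans hK'
  obtain ⟨σ, hσK, hσ1⟩ := K.fixingSubgroup.nontrivial_iff_exists_ne_one.mp <|
    Finite.one_lt_card_iff_nontrivial.mp <| (hcard hK).symm ▸ hp.out.one_lt
  refine ⟨σ, hσK, fun K' hK' hne hσK' => hne ?_⟩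
  rw [← fixedField_fixingSubgroup K', ← fixedField_fixingSubgroup K,
    Subgroup.eq_zpowers_of_card_eq_prime (hcard hK') hσK' hσ1,
    Subgroup.eq_zpowers_of_card_eq_prime (hcard hK) hσK hσ1]

theorem IntermediateField.finrank_mul_finrank_restrict {F E : Type*} [Field F] [Field E]
    [Algebra F E] {K L : IntermediateField F E} (hK : K ≤ L) :
    finrank F K * finrank (restrict hK) L = finrank F L := by
  rw [(restrictAlgEquiv hK).toLinearEquiv.finrank_eq, finrank_mul_finrank]

theorem IntermediateField.mem_fixingSubgroup_restrict_iff {F E : Type*} [Field F] [Field E]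
    [Algebra F E] {K L : IntermediateField F E} (h : K ≤ L) (σ : L ≃ₐ[F] L) :
    σ ∈ (restrict h).fixingSubgroup ↔ ∀ x : K, σ (inclusion h x) = inclusion h x :=
  by
  rw [mem_fixingSubgroup_iff]
  exact ⟨fun H x => H _ ⟨x, rfl⟩, fun H _ ⟨x, hx⟩ => hx ▸ H x⟩

theorem IntermediateField.exists_eq_algebraMap_add_algebraMap_mul_gen {F E : Type*} [Field F]
    [Field E] [Algebra F E] {s : E} {q : F} (hs : s ^ 2 = algebraMap F E q) (x : F⟮s⟯) :
    ∃ a b : F, x = algebraMap F F⟮s⟯ a + algebraMap F F⟮s⟯ b * AdjoinSimple.gen F s := by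
  have hsalg : IsAlgebraic F s :=
    ⟨.X ^ 2 - .C q, Polynomial.X_pow_sub_C_ne_zero two_pos q, by simp [hs]⟩
  have hx : (x : E) ∈ Algebra.adjoin F {s} := by
    rw [← adjoin_simple_toSubalgebra_of_isAlgebraic hsalg]
    exact x.2
  suffices ∀ y ∈ Algebra.adjoin F {s}, ∃ a b : F, y = algebraMap F E a + algebraMap F E b * s by
    obtain ⟨a, b, hab⟩ := this x hx
    exact ⟨a, b, Subtype.ext hab⟩
  intro y hy
  induction hy using Algebra.adjoin_induction with
  | mem y hy => exact ⟨0, 1, by simp [Set.mem_singleton_iff.mp hy]⟩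
  | algebraMap r => exact ⟨r, 0, by simp⟩
  | add y z _ _ hy hz =>
    obtain ⟨a, b, rfl⟩ := hy
    obtain ⟨c, e, rfl⟩ := hz
    exact ⟨a + c, b + e, by simp only [map_add]; ring⟩
  | mul y z _ _ hy hz =>
    obtain ⟨a, b, rfl⟩ := hy
    obtain ⟨c, e, rfl⟩ := hz
    refine ⟨a * c + b * e * q, a * e + b * c, ?_⟩
    simp only [map_add, map_mul]
    linear_combination (algebraMap F E b * algebraMap F E e) * hs

theorem exists_mul_algEquiv_apply_eq_algebraMap {F E : Type*} [Field F] [Field E] [Algebra F E]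
    {s : E} {q : F} (hs : s ^ 2 = algebraMap F E q) {L : IntermediateField F E} (h : F⟮s⟯ ≤ L)
    {σ : L ≃ₐ[F] L} (hσ : σ ∉ (restrict h).fixingSubgroup) (x : F⟮s⟯) :
    ∃ r : F, inclusion h x * σ (inclusion h x) = algebraMap F L r := by
  set t := inclusion h (AdjoinSimple.gen F s)
  have ht : t ^ 2 = algebraMap F L q := by
    rw [← map_pow, ← AlgHom.commutes (inclusion h)]
    exact congrArg _ (Subtype.ext (by simpa using hs))
  have hrep (y : F⟮s⟯) : ∃ a b : F, inclusion h y = algebraMap F L a + algebraMap F L b * t := by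
    obtain ⟨a, b, rfl⟩ := exists_eq_algebraMap_add_algebraMap_mul_gen hs y
    exact ⟨a, b, by simp only [t, map_add, map_mul, AlgHom.commutes]⟩
  have hσt : σ t = -t := by
    refine (sq_eq_sq_iff_eq_or_eq_neg.mp ?_).resolve_left fun hfix => hσ ?_
    · rw [← map_pow, ht, AlgEquiv.commutes]
    · refine (mem_fixingSubgroup_restrict_iff h σ).mpr fun y => ?_
      obtain ⟨a, b, hy⟩ := hrep y
      rw [hy, map_add, map_mul, AlgEquiv.commutes, AlgEquiv.commutes, hfix]
  obtain ⟨a, b, hx⟩ := hrep x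
  refine ⟨a ^ 2 - b ^ 2 * q, ?_⟩
  rw [hx, map_add, map_mul, AlgEquiv.commutes, AlgEquiv.commutes, hσt]
  simp only [map_sub, map_mul, map_pow, ← ht]
  ring

theorem Rat.eq_one_or_neg_one_of_isIntegral {r r' : ℚ} (hr : IsIntegral ℤ r)
    (hr' : IsIntegral ℤ r') (h : r * r' = 1) : r = 1 ∨ r = -1 := by
  obtain ⟨n, rfl⟩ := IsIntegrallyClosed.isIntegral_iff.mp hr
  obtain ⟨n', rfl⟩ := IsIntegrallyClosed.isIntegral_iff.mp hr'
  have hnn' : n * n' = 1 := by exact_mod_cast (by simpa using h : (n : ℚ) * n' = 1)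
  rcases Int.eq_one_or_neg_one_of_mul_eq_one hnn' with rfl | rfl <;> simp

theorem sq_mul_algEquiv_apply_eq_one {E : Type*} [Field E] [CharZero E] {s : E} {q : ℚ}
    (hs : s ^ 2 = algebraMap ℚ E q) {L : IntermediateField ℚ E} (h : ℚ⟮s⟯ ≤ L)
    {σ : L ≃ₐ[ℚ] L} (hσ : σ ∉ (restrict h).fixingSubgroup) {x y : ℚ⟮s⟯}
    (hx : IsIntegral ℤ x) (hy : IsIntegral ℤ y) (hxy : x * y = 1) :
    (inclusion h x * σ (inclusion h x)) ^ 2 = 1 := by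
  have hint {z : ℚ⟮s⟯} (hz : IsIntegral ℤ z) {r : ℚ}
      (hr : inclusion h z * σ (inclusion h z) = algebraMap ℚ L r) : IsIntegral ℤ r := by
    have hz' := hz.map (inclusion h : ℚ⟮s⟯ →+* L).toIntAlgHom
    rw [← isIntegral_algebraMap_iff (algebraMap ℚ L).injective, ← hr]
    exact hz'.mul (hz'.map (σ : L →+* L).toIntAlgHom)
  -- The ascriptions trade the ℚ-algebra structure of the subfield `L`, in which the lemma is
  -- stated, for the canonical `DivisionRing.toRatAlgebra`: the two agree only up to unfolding.
  obtain ⟨r, hr : inclusion h x * σ (inclusion h x) = algebraMap ℚ L r⟩ :=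
    exists_mul_algEquiv_apply_eq_algebraMap hs h hσ x
  obtain ⟨r', hr' : inclusion h y * σ (inclusion h y) = algebraMap ℚ L r'⟩ :=
    exists_mul_algEquiv_apply_eq_algebraMap hs h hσ y
  have hrr' : r * r' = 1 := by
    apply (algebraMap ℚ L).injective
    rw [map_mul, map_one, ← hr, ← hr', mul_mul_mul_comm, ← map_mul σ, ← map_mul, hxy, map_one,
      map_one, one_mul]
  rw [hr]
  rcases Rat.eq_one_or_neg_one_of_isIntegral (hint hx hr) (hint hy hr') hrr' with rfl | rfl <;>
    simp

theorem exists_algEquiv_fixing_and_sq_mul_apply_eq_one {E : Type*} [Field E] [CharZero E]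
    {L : IntermediateField ℚ E} [FiniteDimensional ℚ L] [IsGalois ℚ L] (hL : finrank ℚ L = 4)
    {K : IntermediateField ℚ E} (hK : K ≤ L) (hK2 : finrank ℚ K = 2) :
    ∃ σ : L ≃ₐ[ℚ] L, (∀ x : K, σ (inclusion hK x) = inclusion hK x) ∧
      ∀ {s : E} {q : ℚ}, s ^ 2 = algebraMap ℚ E q → ∀ (hs : ℚ⟮s⟯ ≤ L), finrank ℚ ℚ⟮s⟯ = 2 →
        K ≠ ℚ⟮s⟯ → ∀ u : (𝓞 ℚ⟮s⟯)ˣ,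
          (inclusion hs (u : ℚ⟮s⟯) * σ (inclusion hs (u : ℚ⟮s⟯))) ^ 2 = 1 := by
  have hrestrict {K' : IntermediateField ℚ E} (hK' : K' ≤ L) (h2 : finrank ℚ K' = 2) :
      finrank (restrict hK') L = 2 := by
    have htower := finrank_mul_finrank_restrict hK'
    rw [h2, hL] at htower
    omega
  -- `restrict` uses the subfield's ℚ-algebra structure on `L`, for which instance search cannot
  -- find the Galois hypothesis stated with the canonical one.
  obtain ⟨σ, hσK, hσ⟩ :=
    IsGalois.exists_mem_fixingSubgroup_forall_notMem (hGal := ‹IsGalois ℚ L›)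
      (hrestrict hK hK2)
  refine ⟨σ, (mem_fixingSubgroup_restrict_iff hK σ).mp hσK, fun {s q} hsq hs hs2 hne u => ?_⟩
  have hσs : σ ∉ (restrict hs).fixingSubgroup := hσ _ (hrestrict hs hs2)
    fun heq => hne (by rw [← lift_restrict hK, ← lift_restrict hs, heq])
  exact sq_mul_algEquiv_apply_eq_one hsq hs hσs (RingOfIntegers.isIntegral_coe (u : 𝓞 ℚ⟮s⟯))
    (RingOfIntegers.isIntegral_coe ((u⁻¹ : (𝓞 ℚ⟮s⟯)ˣ) : 𝓞 ℚ⟮s⟯)) (by simp)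

theorem zpow_pow_four_eq_one_of_map_eq {K : Type*} [Field K] (σ : K →+* K) {a b c : K}
    {l m n : ℤ} (h : a ^ l * b ^ m * c ^ n = 1) (ha : σ a = a) (hb : (b * σ b) ^ 2 = 1)
    (hc : (c * σ c) ^ 2 = 1) : (a ^ l) ^ 4 = 1 := by
  have hσh : a ^ l * σ b ^ m * σ c ^ n = 1 := by
    simpa only [map_mul, map_zpow₀, ha, map_one] using congrArg σ h
  have hpow {x : K} (hx : (x * σ x) ^ 2 = 1) (k : ℤ) : (x ^ k * σ x ^ k) ^ 2 = 1 := by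
    rw [← mul_zpow, ← zpow_natCast, ← zpow_mul, mul_comm k, zpow_mul, zpow_natCast, hx, one_zpow]
  -- `(a ^ l) ^ 4 = (h · σ h) ^ 2` after cancelling the factors `hpow hb m` and `hpow hc n`.
  linear_combination (-(a ^ l) ^ 4 * (b ^ m * σ b ^ m) ^ 2) * hpow hc n - (a ^ l) ^ 4 * hpow hb m
    + (a ^ l * b ^ m * c ^ n * (a ^ l * σ b ^ m * σ c ^ n) + 1)
      * (a ^ l * b ^ m * c ^ n * hσh + h)

theorem eq_zero_of_map_zpow_mul_zpow_mul_zpow_eq_one {K : Type*} [Field K] (f : K →+* ℝ)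
    (σ : K →+* K) {a b c : K} {l m n : ℤ} (h : f a ^ l * f b ^ m * f c ^ n = 1) (ha1 : 1 < f a)
    (ha : σ a = a) (hb : (b * σ b) ^ 2 = 1) (hc : (c * σ c) ^ 2 = 1) : l = 0 := by
  have hK : a ^ l * b ^ m * c ^ n = 1 := f.injective (by simpa only [map_mul, map_zpow₀, map_one])
  have h4 : (f a ^ l) ^ 4 = 1 := by
    simpa only [map_pow, map_zpow₀, map_one]
      using congrArg f (zpow_pow_four_eq_one_of_map_eq σ hK ha hb hc)
  rw [pow_eq_one_iff_of_nonneg (zpow_nonneg (by linarith) l) four_ne_zero,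
    zpow_eq_one_iff_right₀ (by linarith) ha1.ne'] at h4
  exact h4

theorem sq_sqrt_of_finrank_adjoin_sqrt_eq_two {d : ℝ} (h : finrank ℚ ℚ⟮√d⟯ = 2) :
    √d ^ 2 = d := by
  refine Real.sq_sqrt (le_of_not_gt fun hd => ?_)
  rw [Real.sqrt_eq_zero_of_nonpos hd.le, adjoin_zero, IntermediateField.finrank_bot] at h
  omega

theorem fundamental_units_multiplicatively_independent_general
    (L : IntermediateField ℚ ℝ) (hdeg : Module.finrank ℚ L = 4) [IsGalois ℚ L]
    (d₁ d₂ d₃ : ℤ)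
    (K₁ K₂ K₃ : IntermediateField ℚ ℝ)
    (hK₁ : K₁ = IntermediateField.adjoin ℚ {Real.sqrt d₁})
    (hK₂ : K₂ = IntermediateField.adjoin ℚ {Real.sqrt d₂})
    (hK₃ : K₃ = IntermediateField.adjoin ℚ {Real.sqrt d₃})
    (hK₁L : K₁ ≤ L) (hK₂L : K₂ ≤ L) (hK₃L : K₃ ≤ L)
    (h12 : K₁ ≠ K₂) (h13 : K₁ ≠ K₃) (h23 : K₂ ≠ K₃)
    (hq₁ : Module.finrank ℚ K₁ = 2) (hq₂ : Module.finrank ℚ K₂ = 2)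
    (hq₃ : Module.finrank ℚ K₃ = 2)
    (u₁ : (𝓞 K₁)ˣ) (u₂ : (𝓞 K₂)ˣ) (u₃ : (𝓞 K₃)ˣ)
    (hu₁ : (1 : ℝ) < ((u₁ : 𝓞 K₁) : K₁)) (hu₂ : (1 : ℝ) < ((u₂ : 𝓞 K₂) : K₂))
    (hu₃ : (1 : ℝ) < ((u₃ : 𝓞 K₃) : K₃))
    (m₁ m₂ m₃ : ℤ)
    (h : (((u₁ : 𝓞 K₁) : K₁) : ℝ) ^ m₁ * (((u₂ : 𝓞 K₂) : K₂) : ℝ) ^ m₂ *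
        (((u₃ : 𝓞 K₃) : K₃) : ℝ) ^ m₃ = 1) :
    m₁ = 0 ∧ m₂ = 0 ∧ m₃ = 0 := by
  subst hK₁ hK₂ hK₃
  have : FiniteDimensional ℚ L := Module.finite_of_finrank_pos (by omega)
  have hs {d : ℤ} (hd : finrank ℚ ℚ⟮√(d : ℝ)⟯ = 2) : √(d : ℝ) ^ 2 = algebraMap ℚ ℝ d := by
    simpa using sq_sqrt_of_finrank_adjoin_sqrt_eq_two hd
  obtain ⟨σ₁, hfix₁, hnorm₁⟩ := exists_algEquiv_fixing_and_sq_mul_apply_eq_one hdeg hK₁L hq₁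
  obtain ⟨σ₂, hfix₂, hnorm₂⟩ := exists_algEquiv_fixing_and_sq_mul_apply_eq_one hdeg hK₂L hq₂
  obtain ⟨σ₃, hfix₃, hnorm₃⟩ := exists_algEquiv_fixing_and_sq_mul_apply_eq_one hdeg hK₃L hq₃
  refine ⟨?_, ?_, ?_⟩
  · exact eq_zero_of_map_zpow_mul_zpow_mul_zpow_eq_one L.val.toRingHom σ₁.toRingHom h hu₁ (hfix₁ _)
      (hnorm₁ (hs hq₂) hK₂L hq₂ h12 u₂) (hnorm₁ (hs hq₃) hK₃L hq₃ h13 u₃)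
  · exact eq_zero_of_map_zpow_mul_zpow_mul_zpow_eq_one L.val.toRingHom σ₂.toRingHom
      ((congrArg (· * _) (mul_comm _ _)).trans h) hu₂ (hfix₂ _)
      (hnorm₂ (hs hq₁) hK₁L hq₁ h12.symm u₁) (hnorm₂ (hs hq₃) hK₃L hq₃ h23 u₃)
  · exact eq_zero_of_map_zpow_mul_zpow_mul_zpow_eq_one L.val.toRingHom σ₃.toRingHom
      ((mul_rotate _ _ _).trans h) hu₃ (hfix₃ _)
      (hnorm₃ (hs hq₁) hK₁L hq₁ h13.symm u₁) (hnorm₃ (hs hq₂) hK₂L hq₂ h23.symm u₂)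

theorem fundamental_units_multiplicatively_independent
    (L : IntermediateField ℚ ℝ) (hdeg : Module.finrank ℚ L = 4) [IsGalois ℚ L]
    (hklein : Nonempty ((L ≃ₐ[ℚ] L) ≃* Multiplicative (ZMod 2 × ZMod 2)))
    (d₁ d₂ d₃ : ℤ) (hd₁ : Squarefree d₁) (hd₂ : Squarefree d₂) (hd₃ : Squarefree d₃)
    (K₁ K₂ K₃ : IntermediateField ℚ ℝ)
    (hK₁ : K₁ = IntermediateField.adjoin ℚ {Real.sqrt d₁})
    (hK₂ : K₂ = IntermediateField.adjoin ℚ {Real.sqrt d₂})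
    (hK₃ : K₃ = IntermediateField.adjoin ℚ {Real.sqrt d₃})
    (hK₁L : K₁ ≤ L) (hK₂L : K₂ ≤ L) (hK₃L : K₃ ≤ L)
    (h12 : K₁ ≠ K₂) (h13 : K₁ ≠ K₃) (h23 : K₂ ≠ K₃)
    (hq₁ : Module.finrank ℚ K₁ = 2) (hq₂ : Module.finrank ℚ K₂ = 2)
    (hq₃ : Module.finrank ℚ K₃ = 2)
    (u₁ : (𝓞 K₁)ˣ) (u₂ : (𝓞 K₂)ˣ) (u₃ : (𝓞 K₃)ˣ)
    (hu₁ : (1 : ℝ) < ((u₁ : 𝓞 K₁) : K₁)) (hu₂ : (1 : ℝ) < ((u₂ : 𝓞 K₂) : K₂))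
    (hu₃ : (1 : ℝ) < ((u₃ : 𝓞 K₃) : K₃))
    (hfund₁ : ∀ w : (𝓞 K₁)ˣ, ∃ k : ℤ, w = u₁ ^ k ∨ w = -u₁ ^ k)
    (hfund₂ : ∀ w : (𝓞 K₂)ˣ, ∃ k : ℤ, w = u₂ ^ k ∨ w = -u₂ ^ k)
    (hfund₃ : ∀ w : (𝓞 K₃)ˣ, ∃ k : ℤ, w = u₃ ^ k ∨ w = -u₃ ^ k)
    (m₁ m₂ m₃ : ℤ)
    (h : (((u₁ : 𝓞 K₁) : K₁) : ℝ) ^ m₁ * (((u₂ : 𝓞 K₂) : K₂) : ℝ) ^ m₂ *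
        (((u₃ : 𝓞 K₃) : K₃) : ℝ) ^ m₃ = 1) :
    m₁ = 0 ∧ m₂ = 0 ∧ m₃ = 0 :=
  fundamental_units_multiplicatively_independent_general L hdeg d₁ d₂ d₃ K₁ K₂ K₃ hK₁ hK₂ hK₃ hK₁L
    hK₂L hK₃L h12 h13 h23 hq₁ hq₂ hq₃ u₁ u₂ u₃ hu₁ hu₂ hu₃ m₁ m₂ m₃ h
end

section
/- Let L ⊂ ℝ be a Galois quартic extension of ℚ with Galois group ≅ ℤ/2 × ℤ/2, let u₁, u₂, u₃ be fundamental units of the three quadratic subfields, and let E be the subgroup of units generated by u₁, u₂, u₃. Then for every unit u of the ring of integers of L, u² ∈ ±E, i.e. u² = ± u₁^{m₁} u₂^{m₂} u₃^{m₃} for some integers m₁, m₂, m₃. -/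
/-!
Write `x` for the real value of `u` and `τᵢ` for the non-trivial element of `Gal(L/Kᵢ)`.
Then `x · τᵢ x` is the norm of `x` from `L` to `Kᵢ`, a unit of `𝓞 Kᵢ`, hence `±uᵢ ^ mᵢ`.
As `1, τ₁, τ₂, τ₃` exhaust `Gal(L/ℚ)`, `x² · N_{L/ℚ}(x) = (x · τ₁ x)(x · τ₂ x)(x · τ₃ x)`,
and `N_{L/ℚ}(x) = ±1`; so `|x²| = |u₁ ^ m₁ u₂ ^ m₂ u₃ ^ m₃|`.
-/

open NumberField IntermediateField

section Galois

variable {F E : Type*} [Field F] [Field E] [Algebra F E]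

theorem prod_apply_mem_fixedField (H : Subgroup Gal(E/F)) [Fintype H] (x : E) :
    ∏ h : H, (h : Gal(E/F)) x ∈ fixedField H := by
  rw [mem_fixedField_iff]
  intro g hg
  rw [map_prod]
  exact Fintype.prod_equiv (Equiv.mulLeft ⟨g, hg⟩) _ _ fun _ => rfl

theorem prod_apply_mul_prod_apply_eq_one (H : Subgroup Gal(E/F)) [Fintype H] {x y : E}
    (hxy : x * y = 1) : (∏ h : H, (h : Gal(E/F)) x) * ∏ h : H, (h : Gal(E/F)) y = 1 := by
  simp only [← Finset.prod_mul_distrib, ← map_mul, hxy, map_one, Finset.prod_const_one]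

theorem isIntegral_prod_apply (H : Subgroup Gal(E/F)) [Fintype H] {x : E}
    (hx : IsIntegral ℤ x) : IsIntegral ℤ (∏ h : H, (h : Gal(E/F)) x) :=
  IsIntegral.prod _ fun h _ => hx.map (h : Gal(E/F)).toRingHom.toIntAlgHom

end Galois

theorem abs_prod_apply_eq_one {E : Type*} [Field E] [NumberField E] [IsGalois ℚ E]
    (φ : E →+* ℝ) (u : (𝓞 E)ˣ) : |∏ σ : Gal(E/ℚ), φ (σ u)| = 1 := by
  rw [← map_prod, ← Algebra.norm_eq_prod_automorphisms, eq_ratCast, map_ratCast, ← Rat.cast_abs,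
    Units.norm, Rat.cast_one]

section RealSubfield

variable {K L : IntermediateField ℚ ℝ}

theorem exists_unit_coe_eq {x y : ℝ} (hx : x ∈ K) (hxy : x * y = 1) (hxi : IsIntegral ℤ x)
    (hyi : IsIntegral ℤ y) : ∃ w : (𝓞 K)ˣ, (((w : 𝓞 K) : K) : ℝ) = x := by
  have hy : y ∈ K := by
    rw [eq_inv_of_mul_eq_one_right hxy]
    exact inv_mem hx
  have integral_of_mem {z : ℝ} (hz : z ∈ K) (hzi : IsIntegral ℤ z) : IsIntegral ℤ (⟨z, hz⟩ : K) :=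
    (isIntegral_algHom_iff (IsScalarTower.toAlgHom ℤ K ℝ) (algebraMap K ℝ).injective).mp hzi
  let a : 𝓞 K := ⟨⟨x, hx⟩, integral_of_mem hx hxi⟩
  let b : 𝓞 K := ⟨⟨y, hy⟩, integral_of_mem hy hyi⟩
  have hab : a * b = 1 := RingOfIntegers.ext (Subtype.ext hxy)
  exact ⟨(IsUnit.of_mul_eq_one b hab).unit, rfl⟩

theorem exists_abs_coe_unit_eq_abs_zpow {v : (𝓞 K)ˣ}
    (hfund : ∀ w : (𝓞 K)ˣ, ∃ k : ℤ, w = v ^ k ∨ w = -v ^ k) (w : (𝓞 K)ˣ) :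
    ∃ k : ℤ, |(((w : 𝓞 K) : K) : ℝ)| = |(((v : 𝓞 K) : K) : ℝ) ^ k| := by
  let φ : 𝓞 K →+* ℝ := (algebraMap K ℝ).comp (algebraMap (𝓞 K) K)
  have φ_zpow (k : ℤ) : φ ↑(v ^ k) = φ ↑v ^ k := by
    change ((Units.map (φ : 𝓞 K →* ℝ) (v ^ k) : ℝˣ) : ℝ) = _
    rw [map_zpow, Units.val_zpow_eq_zpow_val]
    rfl
  obtain ⟨k, rfl | rfl⟩ := hfund w <;> refine ⟨k, ?_⟩
  · exact congrArg abs (φ_zpow k)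
  · exact (congrArg abs (map_neg φ _)).trans ((abs_neg _).trans (congrArg abs (φ_zpow k)))

variable [FiniteDimensional ℚ L] [IsGalois ℚ L]

theorem exists_abs_prod_fixingSubgroup_eq_abs_zpow {F : IntermediateField ℚ L}
    (hF : lift F = K) {v : (𝓞 K)ˣ} (hfund : ∀ w : (𝓞 K)ˣ, ∃ k : ℤ, w = v ^ k ∨ w = -v ^ k)
    (u : (𝓞 L)ˣ) [Fintype F.fixingSubgroup] :
    ∃ k : ℤ, |∏ h : F.fixingSubgroup, (((h : Gal(L/ℚ)) ((u : 𝓞 L) : L) : L) : ℝ)| =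
      |(((v : 𝓞 K) : K) : ℝ) ^ k| := by
  have hmem : ((∏ h : F.fixingSubgroup, (h : Gal(L/ℚ)) ((u : 𝓞 L) : L) : L) : ℝ) ∈ K := by
    have := prod_apply_mem_fixedField F.fixingSubgroup ((u : 𝓞 L) : L)
    rw [IsGalois.fixedField_fixingSubgroup] at this
    exact hF ▸ (mem_lift _).mpr this
  have hunit := prod_apply_mul_prod_apply_eq_one F.fixingSubgroup (x := ((u : 𝓞 L) : L))
    (y := (((u⁻¹ : (𝓞 L)ˣ) : 𝓞 L) : L)) (by simp)
  obtain ⟨w, hw⟩ := exists_unit_coe_eq hmem (congrArg ((↑) : L → ℝ) hunit)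
    ((isIntegral_prod_apply F.fixingSubgroup (RingOfIntegers.isIntegral_coe _)).algebraMap)
    ((isIntegral_prod_apply F.fixingSubgroup (RingOfIntegers.isIntegral_coe _)).algebraMap)
  obtain ⟨k, hk⟩ := exists_abs_coe_unit_eq_abs_zpow hfund w
  refine ⟨k, ?_⟩
  rw [← hk, hw, IntermediateField.coe_prod]

theorem finrank_lift_mul_card_fixingSubgroup (F : IntermediateField ℚ L) :
    Module.finrank ℚ (lift F) * Nat.card F.fixingSubgroup = Module.finrank ℚ L := by
  rw [IsGalois.card_fixingSubgroup_eq_finrank, ← (liftAlgEquiv F).toLinearEquiv.finrank_eq]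
  exact Module.finrank_mul_finrank ℚ F L

theorem fixingSubgroup_ne_of_lift_ne {F F' : IntermediateField ℚ L} (h : lift F ≠ lift F') :
    F.fixingSubgroup ≠ F'.fixingSubgroup := by
  contrapose! h
  rw [← IsGalois.fixedField_fixingSubgroup F, h, IsGalois.fixedField_fixingSubgroup]

end RealSubfield

section KleinFour

variable {G M : Type*} [Group G] [CommMonoid M]

theorem Subgroup.exists_mem_iff_of_card_eq_two {H : Subgroup G} (hH : Nat.card H = 2) :
    ∃ τ ≠ 1, ∀ g, g ∈ H ↔ g = 1 ∨ g = τ := by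
  obtain ⟨τ, hτ, hH⟩ := (Nat.card_eq_two_iff' (1 : H)).mp hH
  refine ⟨τ, fun h => hτ (Subtype.ext h), fun g => ⟨fun hg => ?_, ?_⟩⟩
  · by_cases hg1 : g = 1
    · exact .inl hg1
    · exact .inr (congrArg Subtype.val (hH ⟨g, hg⟩ fun h => hg1 (congrArg Subtype.val h)))
  · rintro (rfl | rfl)
    exacts [H.one_mem, τ.2]

theorem Subgroup.prod_eq_mul_of_mem_iff {H : Subgroup G} [Fintype H] {τ : G} (hτ : τ ≠ 1)
    (hH : ∀ g, g ∈ H ↔ g = 1 ∨ g = τ) (f : G → M) : ∏ h : H, f h = f 1 * f τ := by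
  classical
  rw [← Finset.prod_subtype {1, τ} fun g => by simpa using (hH g).symm, Finset.prod_pair hτ.symm]

theorem sq_mul_prod_eq_prod_mul_prod_mul_prod [Fintype G] (hG : Nat.card G = 4)
    {H₁ H₂ H₃ : Subgroup G} [Fintype H₁] [Fintype H₂] [Fintype H₃]
    (h₁ : Nat.card H₁ = 2) (h₂ : Nat.card H₂ = 2) (h₃ : Nat.card H₃ = 2)
    (h12 : H₁ ≠ H₂) (h13 : H₁ ≠ H₃) (h23 : H₂ ≠ H₃) (f : G → M) :
    f 1 ^ 2 * ∏ g, f g = (∏ h : H₁, f h) * (∏ h : H₂, f h) * ∏ h : H₃, f h := by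
  classical
  obtain ⟨τ₁, hτ₁, mem₁⟩ := Subgroup.exists_mem_iff_of_card_eq_two h₁
  obtain ⟨τ₂, hτ₂, mem₂⟩ := Subgroup.exists_mem_iff_of_card_eq_two h₂
  obtain ⟨τ₃, hτ₃, mem₃⟩ := Subgroup.exists_mem_iff_of_card_eq_two h₃
  have ne_of_ne {H H' : Subgroup G} {τ τ' : G} (hH : ∀ g, g ∈ H ↔ g = 1 ∨ g = τ)
      (hH' : ∀ g, g ∈ H' ↔ g = 1 ∨ g = τ') (hne : H ≠ H') : τ ≠ τ' := by
    rintro rfl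
    exact hne (Subgroup.ext fun g => (hH g).trans (hH' g).symm)
  have hτ12 := ne_of_ne mem₁ mem₂ h12
  have hτ13 := ne_of_ne mem₁ mem₃ h13
  have hτ23 := ne_of_ne mem₂ mem₃ h23
  have huniv : ({1, τ₁, τ₂, τ₃} : Finset G) = Finset.univ := by
    refine Finset.eq_univ_of_card _ ?_
    rw [← Nat.card_eq_fintype_card, hG]
    simp [Finset.card_insert_of_notMem, *, hτ₁.symm, hτ₂.symm, hτ₃.symm]
  rw [← huniv, Finset.prod_insert (by simp [hτ₁.symm, hτ₂.symm, hτ₃.symm]),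
    Finset.prod_insert (by simp [*]), Finset.prod_pair hτ23,
    Subgroup.prod_eq_mul_of_mem_iff hτ₁ mem₁, Subgroup.prod_eq_mul_of_mem_iff hτ₂ mem₂,
    Subgroup.prod_eq_mul_of_mem_iff hτ₃ mem₃, sq]
  ac_rfl

end KleinFour

theorem unit_sq_mem_E_general
    (L : IntermediateField ℚ ℝ) (hdeg : Module.finrank ℚ L = 4) [IsGalois ℚ L]
    (K₁ K₂ K₃ : IntermediateField ℚ ℝ)
    (hK₁L : K₁ ≤ L) (hK₂L : K₂ ≤ L) (hK₃L : K₃ ≤ L)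
    (h12 : K₁ ≠ K₂) (h13 : K₁ ≠ K₃) (h23 : K₂ ≠ K₃)
    (hq₁ : Module.finrank ℚ K₁ = 2) (hq₂ : Module.finrank ℚ K₂ = 2)
    (hq₃ : Module.finrank ℚ K₃ = 2)
    (u₁ : (𝓞 K₁)ˣ) (u₂ : (𝓞 K₂)ˣ) (u₃ : (𝓞 K₃)ˣ)
    (hfund₁ : ∀ w : (𝓞 K₁)ˣ, ∃ k : ℤ, w = u₁ ^ k ∨ w = -u₁ ^ k)
    (hfund₂ : ∀ w : (𝓞 K₂)ˣ, ∃ k : ℤ, w = u₂ ^ k ∨ w = -u₂ ^ k)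
    (hfund₃ : ∀ w : (𝓞 K₃)ˣ, ∃ k : ℤ, w = u₃ ^ k ∨ w = -u₃ ^ k)
    (u : (𝓞 L)ˣ) :
    ∃ m₁ m₂ m₃ : ℤ,
      ((((u : 𝓞 L) : L) : ℝ) ^ 2 =
          (((u₁ : 𝓞 K₁) : K₁) : ℝ) ^ m₁ * (((u₂ : 𝓞 K₂) : K₂) : ℝ) ^ m₂ *
            (((u₃ : 𝓞 K₃) : K₃) : ℝ) ^ m₃) ∨
      ((((u : 𝓞 L) : L) : ℝ) ^ 2 =
          -((((u₁ : 𝓞 K₁) : K₁) : ℝ) ^ m₁ * (((u₂ : 𝓞 K₂) : K₂) : ℝ) ^ m₂ *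
            (((u₃ : 𝓞 K₃) : K₃) : ℝ) ^ m₃)) := by
  classical
  have : FiniteDimensional ℚ L := .of_finrank_pos (by omega)
  have : NumberField L := ⟨⟩
  -- Stating the type of `F` puts it over the `Algebra ℚ L` instance of `IsGalois ℚ L`,
  -- whereas `restrict` is stated over `IntermediateField.algebra'`.
  obtain ⟨F₁, hF₁⟩ : ∃ F : IntermediateField ℚ L, lift F = K₁ := ⟨_, lift_restrict hK₁L⟩
  obtain ⟨F₂, hF₂⟩ : ∃ F : IntermediateField ℚ L, lift F = K₂ := ⟨_, lift_restrict hK₂L⟩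
  obtain ⟨F₃, hF₃⟩ : ∃ F : IntermediateField ℚ L, lift F = K₃ := ⟨_, lift_restrict hK₃L⟩
  have card_eq_two {F : IntermediateField ℚ L} {K : IntermediateField ℚ ℝ} (hF : lift F = K)
      (hK : Module.finrank ℚ K = 2) : Nat.card F.fixingSubgroup = 2 := by
    have := finrank_lift_mul_card_fixingSubgroup F
    rw [hF, hK, hdeg] at this
    omega
  have key := sq_mul_prod_eq_prod_mul_prod_mul_prod
    (by rw [IsGalois.card_aut_eq_finrank, hdeg]) (card_eq_two hF₁ hq₁) (card_eq_two hF₂ hq₂)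
    (card_eq_two hF₃ hq₃) (fixingSubgroup_ne_of_lift_ne (hF₁ ▸ hF₂ ▸ h12))
    (fixingSubgroup_ne_of_lift_ne (hF₁ ▸ hF₃ ▸ h13))
    (fixingSubgroup_ne_of_lift_ne (hF₂ ▸ hF₃ ▸ h23))
    fun σ : Gal(L/ℚ) => ((σ ((u : 𝓞 L) : L) : L) : ℝ)
  obtain ⟨m₁, hm₁⟩ := exists_abs_prod_fixingSubgroup_eq_abs_zpow hF₁ hfund₁ u
  obtain ⟨m₂, hm₂⟩ := exists_abs_prod_fixingSubgroup_eq_abs_zpow hF₂ hfund₂ u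
  obtain ⟨m₃, hm₃⟩ := exists_abs_prod_fixingSubgroup_eq_abs_zpow hF₃ hfund₃ u
  refine ⟨m₁, m₂, m₃, abs_eq_abs.mp ?_⟩
  rw [← mul_one |_|, ← abs_prod_apply_eq_one (algebraMap L ℝ) u, ← abs_mul]
  refine (congrArg abs key).trans ?_
  rw [abs_mul, abs_mul, hm₁, hm₂, hm₃, ← abs_mul, ← abs_mul]

theorem unit_sq_mem_E
    (L : IntermediateField ℚ ℝ) (hdeg : Module.finrank ℚ L = 4) [IsGalois ℚ L]
    (hklein : Nonempty ((L ≃ₐ[ℚ] L) ≃* Multiplicative (ZMod 2 × ZMod 2)))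
    (d₁ d₂ d₃ : ℤ) (hd₁ : Squarefree d₁) (hd₂ : Squarefree d₂) (hd₃ : Squarefree d₃)
    (K₁ K₂ K₃ : IntermediateField ℚ ℝ)
    (hK₁ : K₁ = IntermediateField.adjoin ℚ {Real.sqrt d₁})
    (hK₂ : K₂ = IntermediateField.adjoin ℚ {Real.sqrt d₂})
    (hK₃ : K₃ = IntermediateField.adjoin ℚ {Real.sqrt d₃})
    (hK₁L : K₁ ≤ L) (hK₂L : K₂ ≤ L) (hK₃L : K₃ ≤ L)
    (h12 : K₁ ≠ K₂) (h13 : K₁ ≠ K₃) (h23 : K₂ ≠ K₃)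
    (hq₁ : Module.finrank ℚ K₁ = 2) (hq₂ : Module.finrank ℚ K₂ = 2)
    (hq₃ : Module.finrank ℚ K₃ = 2)
    (u₁ : (𝓞 K₁)ˣ) (u₂ : (𝓞 K₂)ˣ) (u₃ : (𝓞 K₃)ˣ)
    (hu₁ : (1 : ℝ) < ((u₁ : 𝓞 K₁) : K₁)) (hu₂ : (1 : ℝ) < ((u₂ : 𝓞 K₂) : K₂))
    (hu₃ : (1 : ℝ) < ((u₃ : 𝓞 K₃) : K₃))
    (hfund₁ : ∀ w : (𝓞 K₁)ˣ, ∃ k : ℤ, w = u₁ ^ k ∨ w = -u₁ ^ k)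
    (hfund₂ : ∀ w : (𝓞 K₂)ˣ, ∃ k : ℤ, w = u₂ ^ k ∨ w = -u₂ ^ k)
    (hfund₃ : ∀ w : (𝓞 K₃)ˣ, ∃ k : ℤ, w = u₃ ^ k ∨ w = -u₃ ^ k)
    (u : (𝓞 L)ˣ) :
    ∃ m₁ m₂ m₃ : ℤ,
      ((((u : 𝓞 L) : L) : ℝ) ^ 2 =
          (((u₁ : 𝓞 K₁) : K₁) : ℝ) ^ m₁ * (((u₂ : 𝓞 K₂) : K₂) : ℝ) ^ m₂ *
            (((u₃ : 𝓞 K₃) : K₃) : ℝ) ^ m₃) ∨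
      ((((u : 𝓞 L) : L) : ℝ) ^ 2 =
          -((((u₁ : 𝓞 K₁) : K₁) : ℝ) ^ m₁ * (((u₂ : 𝓞 K₂) : K₂) : ℝ) ^ m₂ *
            (((u₃ : 𝓞 K₃) : K₃) : ℝ) ^ m₃)) :=
  unit_sq_mem_E_general L hdeg K₁ K₂ K₃ hK₁L hK₂L hK₃L h12 h13 h23 hq₁ hq₂ hq₃ u₁ u₂ u₃ hfund₁
    hfund₂ hfund₃ u
end

section
/- The four smallest values among fundamental units (greater than 1) of real quadratic fields ℚ(√m), m square-free, are (1+√5)/2, 1+√2, (3+√13)/2, and 2+√3, attained at m = 5, 2, 13, 3 respectively. In particular, if m is a square-free integer with m ∉ {2, 3, 5, 13}, then the fundamental unit v_m > 1 of ℚ(√m) satisfies v_m > 2 + √3. -/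
/-!
A unit `w > 1` of the ring of integers of `ℚ(√m)` is `(a + b√m)/2` with positive integers `a`, `b`
and `a² - m b² = ±4`: its minimal polynomial `X² - aX ± 1` over `ℚ` has integer coefficients, and
`b` is an integer because `m b² = a² ∓ 4` with `m` squarefree. Conversely each such pair gives a
unit, so the fundamental unit, being the least unit `> 1`, comes from the pair with least `a` and
`b`. For `m = 5, 2, 13, 3` this pair is `(1, 1), (2, 2), (3, 1), (4, 2)`; for every other
squarefree `m` a small case analysis gives `a ≥ 4` and `m b² ≥ 13 > 12`, so `v_m > 2 + √3`.
-/

open NumberField Polynomial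

theorem Squarefree.irrational_sqrt {m : ℤ} (hsf : Squarefree m) (hm : 1 < m) :
    Irrational √m := by
  refine (irrational_sqrt_intCast_iff_of_nonneg (by omega)).mpr ?_
  rintro ⟨r, rfl⟩
  rcases Int.isUnit_iff.mp (hsf r dvd_rfl) with rfl | rfl <;> simp at hm

theorem Squarefree.exists_int_eq_of_mul_sq_eq {m z : ℤ} (hsf : Squarefree m) {q : ℚ}
    (h : m * q ^ 2 = z) : ∃ c : ℤ, q = c := by
  have hnum : m * q.num ^ 2 = q.den ^ 2 * z := by
    have hden : (q.den : ℚ) ≠ 0 := by exact_mod_cast q.den_nz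
    rw [← Rat.num_div_den q] at h
    field_simp at h
    exact_mod_cast h
  have hden : IsUnit (q.den : ℤ) := hsf _ <| by
    rw [← sq]
    exact ((Rat.isCoprime_num_den q).symm.pow).dvd_of_dvd_mul_right ⟨z, hnum⟩
  refine ⟨q.num, (Rat.coe_int_num_of_den_eq_one ?_).symm⟩
  exact_mod_cast Int.isUnit_iff.mp hden |>.resolve_right (by omega)

theorem exists_int_eq_of_isIntegral_ratCast {L : Type*} [Field L] [CharZero L] {r : ℚ}
    (h : IsIntegral ℤ (r : L)) : ∃ z : ℤ, r = z := by
  rw [← eq_ratCast (algebraMap ℚ L), isIntegral_algebraMap_iff (algebraMap ℚ L).injective] at h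
  obtain ⟨z, hz⟩ := IsIntegrallyClosed.isIntegral_iff.mp h
  exact ⟨z, by simpa using hz.symm⟩

theorem exists_int_eq_of_isIntegral_of_sq_sub_mul_add_eq_zero {L : Type*} [Field L] [CharZero L]
    {x : L} (hx : IsIntegral ℤ x) (hirr : x ∉ Set.range ((↑) : ℚ → L)) {s t : ℚ}
    (h : x ^ 2 - s * x + t = 0) : (∃ a : ℤ, s = a) ∧ ∃ n : ℤ, t = n := by
  have hP : (X ^ 2 - C s * X + C t).Monic := by monicity!
  have hmin : minpoly ℚ x = X ^ 2 - C s * X + C t := by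
    refine (eq_of_monic_of_dvd_of_natDegree_le (minpoly.monic hx.tower_top) hP
      (minpoly.dvd ℚ x (by simp [h])) ?_).symm
    rw [show (X ^ 2 - C s * X + C t : ℚ[X]).natDegree = 2 by compute_degree!,
      minpoly.two_le_natDegree_iff hx.tower_top]
    rintro ⟨r, rfl⟩
    exact hirr ⟨r, (eq_ratCast _ r).symm⟩
  -- Gauss's lemma: `minpoly ℚ x` is the image of `minpoly ℤ x`.
  have hcoeff (k : ℕ) : (minpoly ℚ x).coeff k = (minpoly ℤ x).coeff k := by
    rw [minpoly.isIntegrallyClosed_eq_field_fractions' ℚ hx, coeff_map, eq_intCast]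
  refine ⟨⟨-(minpoly ℤ x).coeff 1, ?_⟩, ⟨(minpoly ℤ x).coeff 0, ?_⟩⟩
  · have := hcoeff 1
    simp [hmin, coeff_C] at this
    push_cast
    linarith
  · simpa [hmin, coeff_C] using hcoeff 0

theorem exists_rat_eq_add_mul_of_mem_adjoin {L : Type*} [Field L] [CharZero L] {α : L} {d : ℚ}
    (hα : α ^ 2 = d) {x : L} (hx : x ∈ IntermediateField.adjoin ℚ {α}) :
    ∃ p q : ℚ, x = p + q * α := by
  let S : Subalgebra ℚ L :=
    { carrier := {x | ∃ p q : ℚ, x = p + q * α}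
      add_mem' := by
        rintro _ _ ⟨p, q, rfl⟩ ⟨p', q', rfl⟩
        exact ⟨p + p', q + q', by push_cast; ring⟩
      mul_mem' := by
        rintro _ _ ⟨p, q, rfl⟩ ⟨p', q', rfl⟩
        refine ⟨p * p' + q * q' * d, p * q' + q * p', ?_⟩
        push_cast
        linear_combination (q * q' : L) * hα
      algebraMap_mem' r := ⟨r, 0, by simp [eq_ratCast]⟩ }
  have hint : IsIntegral ℚ α := ⟨X ^ 2 - C d, by monicity!, by simp [hα, eq_ratCast]⟩
  rw [← IntermediateField.mem_toSubalgebra,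
    IntermediateField.adjoin_simple_toSubalgebra_of_isAlgebraic hint.isAlgebraic] at hx
  exact (Algebra.adjoin_le (Set.singleton_subset_iff.mpr ⟨0, 1, by simp⟩) : _ ≤ S) hx

/-- As `(a, b)` runs over these pairs, `(a + b√m) / 2` runs over the units `> 1` of `ℚ(√m)`. -/
def IsPosPellPair (m a b : ℤ) : Prop :=
  0 < a ∧ 0 < b ∧ (a ^ 2 - m * b ^ 2 = 4 ∨ a ^ 2 - m * b ^ 2 = -4)

theorem not_isIntegral_ratCast_inv {L : Type*} [Field L] [LinearOrder L] [IsStrictOrderedRing L]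
    {r : ℚ} (hr : 1 < r) : ¬IsIntegral ℤ ((r : L)⁻¹) := by
  intro h
  obtain ⟨z, hz⟩ := exists_int_eq_of_isIntegral_ratCast (L := L) (r := r⁻¹) (by rwa [Rat.cast_inv])
  have hz0 : (0 : ℚ) < z := hz ▸ by positivity
  have hz1 : (z : ℚ) < 1 := hz ▸ inv_lt_one_of_one_lt₀ hr
  have : (0 : ℤ) < z := by exact_mod_cast hz0
  have : z < (1 : ℤ) := by exact_mod_cast hz1
  omega

theorem eq_one_or_eq_neg_one_of_isIntegral_inv {L : Type*} [Field L] [CharZero L] {x : L}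
    (hxinv : IsIntegral ℤ x⁻¹) (hirr : x ∉ Set.range ((↑) : ℚ → L)) {a n : ℤ}
    (h : x ^ 2 - a * x + n = 0) : n = 1 ∨ n = -1 := by
  have hx0 : x ≠ 0 := fun hx ↦ hirr ⟨0, by simp [hx]⟩
  have hn0 : n ≠ 0 := by
    rintro rfl
    refine hirr ⟨a, ?_⟩
    have : x * (x - a) = 0 := by linear_combination h
    simpa [sub_eq_zero, hx0, eq_comm] using this
  have hirr_inv : x⁻¹ ∉ Set.range ((↑) : ℚ → L) := by
    rintro ⟨r, hr⟩
    exact hirr ⟨r⁻¹, by rw [Rat.cast_inv, hr, inv_inv]⟩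
  -- `x⁻¹` is a root of `X² - (a/n) X + 1/n`, so `1/n` is an integer.
  obtain ⟨-, ⟨k, hk⟩⟩ := exists_int_eq_of_isIntegral_of_sq_sub_mul_add_eq_zero hxinv hirr_inv
    (s := a / n) (t := 1 / n) (by push_cast; field_simp; linear_combination h)
  have hnk : (n : ℚ) * k = 1 := by rw [← hk]; field_simp [hn0]
  exact Int.isUnit_iff.mp (IsUnit.of_mul_eq_one k (by exact_mod_cast hnk))

theorem isPosPellPair_of_one_lt {m a b n : ℤ} (hm : 0 < m) (hn : n = 1 ∨ n = -1)
    (hpell : a ^ 2 - m * b ^ 2 = 4 * n) {x : ℝ} (hx1 : 1 < x) (h : x ^ 2 - a * x + n = 0)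
    (hxab : x = (a + b * √m) / 2) : IsPosPellPair m a b := by
  -- The conjugate `a - x = n / x` lies in `(-1, 1)`.
  have hconj : |a - x| < 1 := by
    have hnR : (n : ℝ) = 1 ∨ (n : ℝ) = -1 := by rcases hn with hn | hn <;> simp [hn]
    rw [abs_lt]
    constructor <;> rcases hnR with hn | hn <;> nlinarith
  refine ⟨?_, ?_, ?_⟩
  · have : (0 : ℝ) < a := by linarith [(abs_lt.mp hconj).1]
    exact_mod_cast this
  · have hsqrt_pos : 0 < √(m : ℝ) := Real.sqrt_pos.mpr (by exact_mod_cast hm)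
    have : (0 : ℝ) < b * √m := by linarith [(abs_lt.mp hconj).2]
    exact_mod_cast pos_of_mul_pos_left this hsqrt_pos.le
  · rcases hn with rfl | rfl
    · exact Or.inl hpell
    · exact Or.inr hpell

theorem exists_isPosPellPair_of_isIntegral {m : ℤ} (hm : 1 < m) (hsf : Squarefree m)
    {x : ℝ} (hx1 : 1 < x) (hx : IsIntegral ℤ x) (hxinv : IsIntegral ℤ x⁻¹)
    {p q : ℚ} (hpq : x = p + q * √m) :
    ∃ a b : ℤ, IsPosPellPair m a b ∧ x = (a + b * √m) / 2 := by
  have hsqrt : √(m : ℝ) ^ 2 = m := Real.sq_sqrt (by positivity)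
  have hq : q ≠ 0 := by
    rintro rfl
    simp only [Rat.cast_zero, zero_mul, add_zero] at hpq
    exact not_isIntegral_ratCast_inv (by exact_mod_cast hpq ▸ hx1) (hpq ▸ hxinv)
  have hirr : Irrational x := hpq ▸ ((hsf.irrational_sqrt hm).ratCast_mul hq).ratCast_add p
  obtain ⟨⟨a, ha⟩, ⟨n, hn⟩⟩ := exists_int_eq_of_isIntegral_of_sq_sub_mul_add_eq_zero hx hirr
    (s := 2 * p) (t := p ^ 2 - m * q ^ 2)
    (by rw [hpq]; push_cast; linear_combination (q ^ 2 : ℝ) * hsqrt)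
  have hquad : x ^ 2 - a * x + n = 0 := by
    rw [← Rat.cast_intCast a, ← Rat.cast_intCast n, ← ha, ← hn, hpq]
    push_cast
    linear_combination (q ^ 2 : ℝ) * hsqrt
  obtain ⟨b, hb⟩ := hsf.exists_int_eq_of_mul_sq_eq (q := 2 * q) (z := a ^ 2 - 4 * n)
    (by push_cast; rw [← ha, ← hn]; ring)
  have hpell : a ^ 2 - m * b ^ 2 = 4 * n := by
    have : ((a ^ 2 - m * b ^ 2 : ℤ) : ℚ) = 4 * n := by
      push_cast
      rw [← ha, ← hb, ← hn]
      ring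
    exact_mod_cast this
  have hxab : x = (a + b * √m) / 2 := by
    rw [hpq, ← Rat.cast_intCast a, ← Rat.cast_intCast b, ← ha, ← hb]
    push_cast
    ring
  have hn1 := eq_one_or_eq_neg_one_of_isIntegral_inv hxinv hirr hquad
  exact ⟨a, b, isPosPellPair_of_one_lt (by omega) hn1 hpell hx1 hquad hxab, hxab⟩

theorem IsPosPellPair.one_lt {m a b : ℤ} (hm : 1 < m) (h : IsPosPellPair m a b) :
    1 < (a + b * √m) / 2 := by
  have ha : (1 : ℝ) ≤ a := by exact_mod_cast h.1
  have hb : (1 : ℝ) ≤ b := by exact_mod_cast h.2.1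
  have hsqrt : 1 < √(m : ℝ) := Real.lt_sqrt_of_sq_lt (by exact_mod_cast (by omega : 1 ^ 2 < m))
  nlinarith

theorem IsPosPellPair.sq_le {m a b : ℤ} (h : IsPosPellPair m a b) :
    a ^ 2 ≤ m * b ^ 2 + 4 ∧ m * b ^ 2 ≤ a ^ 2 + 4 := by
  rcases h.2.2 with h | h <;> constructor <;> linarith

theorem IsPosPellPair.two_le_of_two {a b : ℤ} (h : IsPosPellPair 2 a b) : 2 ≤ a ∧ 2 ≤ b := by
  obtain ⟨hle, hge⟩ := h.sq_le
  obtain ⟨ha, hb, hpell⟩ := h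
  by_contra hlt
  have hb2 : b ≤ 2 := by rcases not_and_or.mp hlt with h | h <;> nlinarith
  have ha3 : a ≤ 3 := by nlinarith
  interval_cases a <;> interval_cases b <;> omega

theorem IsPosPellPair.three_le_of_thirteen {a b : ℤ} (h : IsPosPellPair 13 a b) :
    3 ≤ a ∧ 1 ≤ b := by
  obtain ⟨hle, hge⟩ := h.sq_le
  obtain ⟨ha, hb, hpell⟩ := h
  refine ⟨?_, hb⟩
  by_contra hlt
  have hb1 : b ≤ 1 := by nlinarith
  interval_cases a <;> interval_cases b <;> omega

theorem IsPosPellPair.four_le_of_three {a b : ℤ} (h : IsPosPellPair 3 a b) : 4 ≤ a ∧ 2 ≤ b := by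
  obtain ⟨hle, hge⟩ := h.sq_le
  obtain ⟨ha, hb, hpell⟩ := h
  by_contra hlt
  have hb2 : b ≤ 2 := by rcases not_and_or.mp hlt with h | h <;> nlinarith
  have ha4 : a ≤ 4 := by nlinarith
  interval_cases a <;> interval_cases b <;> omega

theorem IsPosPellPair.four_le_and_thirteen_le_mul_sq {m a b : ℤ} (hm : 1 < m) (hsf : Squarefree m)
    (h2 : m ≠ 2) (h3 : m ≠ 3) (h5 : m ≠ 5) (h13 : m ≠ 13) (h : IsPosPellPair m a b) :
    4 ≤ a ∧ 13 ≤ m * b ^ 2 := by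
  obtain ⟨hle, hge⟩ := h.sq_le
  obtain ⟨ha, hb, hpell⟩ := h
  have h8 : m ≠ 8 := by rintro rfl; exact absurd (hsf 2 ⟨2, rfl⟩) (by norm_num [Int.isUnit_iff])
  have h12 : m ≠ 12 := by rintro rfl; exact absurd (hsf 2 ⟨3, rfl⟩) (by norm_num [Int.isUnit_iff])
  have hsmall : m * b ^ 2 ≠ 5 ∧ m * b ^ 2 ≠ 8 ∧ m * b ^ 2 ≠ 12 ∧ m * b ^ 2 ≠ 13 := by
    rcases le_or_gt b 2 with hb2 | hb2
    · interval_cases b <;> omega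
    · have : 13 < m * b ^ 2 := by nlinarith
      omega
  have hpos : 0 < m * b ^ 2 := by positivity
  have ha4 : 4 ≤ a := by
    by_contra hlt
    interval_cases a <;> omega
  refine ⟨ha4, ?_⟩
  by_contra hlt
  obtain rfl : a = 4 := by nlinarith
  omega

theorem two_add_sqrt_three_lt {m a b : ℤ} (ha : 4 ≤ a) (hb : 0 < b) (hmb : 13 ≤ m * b ^ 2) :
    2 + √3 < (a + b * √m) / 2 := by
  have hsqrt12 : √(12 : ℝ) = 2 * √3 := by
    rw [show (12 : ℝ) = 3 * 2 ^ 2 by norm_num, Real.sqrt_mul' _ (by norm_num),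
      Real.sqrt_sq (by norm_num), mul_comm]
  have hbsqrt : (b : ℝ) * √m = √((m * b ^ 2 : ℤ) : ℝ) := by
    push_cast
    rw [Real.sqrt_mul' _ (by positivity), Real.sqrt_sq (by positivity), mul_comm]
  have hlt : √(12 : ℝ) < b * √m :=
    hbsqrt ▸ Real.sqrt_lt_sqrt (by norm_num) (by exact_mod_cast (by omega : 12 < m * b ^ 2))
  have haR : (4 : ℝ) ≤ a := by exact_mod_cast ha
  linarith

theorem le_of_eq_zpow_or_eq_neg_zpow {R : Type*} [Ring R] (φ : R →+* ℝ) {v u : Rˣ}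
    (hv : 1 < φ v) (hu : 1 < φ u) (h : ∃ k : ℤ, u = v ^ k ∨ u = -v ^ k) : φ v ≤ φ u := by
  have hpow (k : ℤ) : φ ↑(v ^ k) = φ v ^ k := by
    have := congrArg Units.val (map_zpow (Units.map φ.toMonoidHom) v k)
    rwa [Units.val_zpow_eq_zpow_val, Units.coe_map, Units.coe_map] at this
  obtain ⟨k, rfl | rfl⟩ := h
  · rw [hpow] at hu ⊢
    have hk : 1 ≤ k := (one_lt_zpow_iff_right₀ hv).mp hu
    simpa using zpow_le_zpow_right₀ hv.le hk
  · have : 0 < φ v ^ k := zpow_pos (by linarith) k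
    rw [Units.val_neg, map_neg, hpow] at hu
    linarith

section RealQuadraticField

variable {m : ℤ} {K : IntermediateField ℚ ℝ}

theorem exists_unit_of_sq_sub_mul_sq_eq (hm : 0 ≤ m) (hK : √m ∈ K) {a b : ℤ}
    (h : a ^ 2 - m * b ^ 2 = 4 ∨ a ^ 2 - m * b ^ 2 = -4) :
    ∃ u : (𝓞 K)ˣ, (((u : 𝓞 K) : K) : ℝ) = (a + b * √m) / 2 := by
  obtain ⟨n, hn, hpell⟩ : ∃ n : ℤ, n * n = 1 ∧ a ^ 2 - m * b ^ 2 = 4 * n := by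
    rcases h with h | h
    · exact ⟨1, rfl, by linarith⟩
    · exact ⟨-1, rfl, by linarith⟩
  have hsqrt : √(m : ℝ) ^ 2 = m := Real.sq_sqrt (by exact_mod_cast hm)
  set t : K := (a + b * ⟨√m, hK⟩) / 2
  have ht : (t : ℝ) = (a + b * √m) / 2 := by push_cast [t]; rfl
  have hroot : (t : ℝ) ^ 2 - a * t + n = 0 := by
    rw [ht]
    have hpellR : (a : ℝ) ^ 2 - m * b ^ 2 = 4 * n := by exact_mod_cast hpell
    linear_combination (b ^ 2 / 4 : ℝ) * hsqrt - (1 / 4 : ℝ) * hpellR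
  have hint : IsIntegral ℤ t := by
    rw [← isIntegral_algebraMap_iff (algebraMap K ℝ).injective]
    exact ⟨X ^ 2 - C a * X + C n, by monicity!, by rw [← aeval_def]; simpa using hroot⟩
  let T : 𝓞 K := ⟨t, hint⟩
  have hinj : Function.Injective (algebraMap (𝓞 K) ℝ) :=
    (algebraMap K ℝ).injective.comp RingOfIntegers.coe_injective
  -- From `T² - aT + n = 0` and `n² = 1`, the inverse of `T` is `n (a - T)`.
  have hT : T * (n * (a - T)) = 1 := by
    apply hinj
    have hval : algebraMap (𝓞 K) ℝ T = t := rfl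
    simp only [map_mul, map_sub, map_intCast, map_one, hval]
    linear_combination (-n : ℝ) * hroot + (by exact_mod_cast hn : (n : ℝ) * n = 1)
  exact ⟨⟨T, _, hT, by rw [mul_comm, hT]⟩, ht⟩

theorem exists_isPosPellPair_of_unit (hm : 1 < m) (hsf : Squarefree m)
    (hK : K = IntermediateField.adjoin ℚ {√m}) (w : (𝓞 K)ˣ)
    (hw : 1 < (((w : 𝓞 K) : K) : ℝ)) :
    ∃ a b : ℤ, IsPosPellPair m a b ∧ (((w : 𝓞 K) : K) : ℝ) = (a + b * √m) / 2 := by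
  have hint (x : 𝓞 K) : IsIntegral ℤ (algebraMap (𝓞 K) ℝ x) :=
    map_isIntegral_int (algebraMap K ℝ) (RingOfIntegers.isIntegral_coe x)
  have hinv : algebraMap (𝓞 K) ℝ ↑w⁻¹ = (((w : 𝓞 K) : K) : ℝ)⁻¹ := map_units_inv _ w
  obtain ⟨p, q, hpq⟩ := exists_rat_eq_add_mul_of_mem_adjoin (α := √(m : ℝ)) (d := m)
    (by rw [Real.sq_sqrt (by positivity)]; simp) (by rw [← hK]; exact ((w : 𝓞 K) : K).2)
  exact exists_isPosPellPair_of_isIntegral hm hsf hw (hint w) (hinv ▸ hint ↑w⁻¹) hpq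

variable {v : (𝓞 K)ˣ}

theorem unit_le_of_isPosPellPair (hm : 1 < m) (hK : √m ∈ K)
    (hv : 1 < (((v : 𝓞 K) : K) : ℝ)) (hfund : ∀ w : (𝓞 K)ˣ, ∃ k : ℤ, w = v ^ k ∨ w = -v ^ k)
    {a b : ℤ} (h : IsPosPellPair m a b) : (((v : 𝓞 K) : K) : ℝ) ≤ (a + b * √m) / 2 := by
  obtain ⟨u, hu⟩ := exists_unit_of_sq_sub_mul_sq_eq (by omega) hK h.2.2
  have hu1 : 1 < (((u : 𝓞 K) : K) : ℝ) := by rw [hu]; exact h.one_lt hm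
  rw [← hu]
  exact le_of_eq_zpow_or_eq_neg_zpow (algebraMap (𝓞 K) ℝ) hv hu1 (hfund u)

theorem unit_eq_of_isPosPellPair_of_forall_le (hm : 1 < m) (hsf : Squarefree m)
    (hK : K = IntermediateField.adjoin ℚ {√m}) (hv : 1 < (((v : 𝓞 K) : K) : ℝ))
    (hfund : ∀ w : (𝓞 K)ˣ, ∃ k : ℤ, w = v ^ k ∨ w = -v ^ k) (a₀ b₀ : ℤ)
    (h₀ : IsPosPellPair m a₀ b₀) (hmin : ∀ a b, IsPosPellPair m a b → a₀ ≤ a ∧ b₀ ≤ b) :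
    (((v : 𝓞 K) : K) : ℝ) = (a₀ + b₀ * √m) / 2 := by
  refine le_antisymm (unit_le_of_isPosPellPair hm ?_ hv hfund h₀) ?_
  · exact hK ▸ IntermediateField.mem_adjoin_simple_self ℚ _
  obtain ⟨a, b, h, hvab⟩ := exists_isPosPellPair_of_unit hm hsf hK v hv
  obtain ⟨ha, hb⟩ := hmin a b h
  have ha' : (a₀ : ℝ) ≤ a := by exact_mod_cast ha
  have hb' : (b₀ : ℝ) ≤ b := by exact_mod_cast hb
  rw [hvab]
  gcongr

end RealQuadraticField

theorem four_smallest_fundamental_units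
    (m : ℤ) (hm : 1 < m) (hsf : Squarefree m)
    (K : IntermediateField ℚ ℝ)
    (hK : K = IntermediateField.adjoin ℚ {Real.sqrt m})
    (v : (𝓞 K)ˣ) (hv : (1 : ℝ) < ((v : 𝓞 K) : K))
    (hfund : ∀ w : (𝓞 K)ˣ, ∃ k : ℤ, w = v ^ k ∨ w = -v ^ k) :
    (m = 5 → (((v : 𝓞 K) : K) : ℝ) = (1 + Real.sqrt 5) / 2) ∧
    (m = 2 → (((v : 𝓞 K) : K) : ℝ) = 1 + Real.sqrt 2) ∧
    (m = 13 → (((v : 𝓞 K) : K) : ℝ) = (3 + Real.sqrt 13) / 2) ∧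
    (m = 3 → (((v : 𝓞 K) : K) : ℝ) = 2 + Real.sqrt 3) ∧
    (m ≠ 2 → m ≠ 3 → m ≠ 5 → m ≠ 13 → (((v : 𝓞 K) : K) : ℝ) > 2 + Real.sqrt 3) := by
  have hv_eq := unit_eq_of_isPosPellPair_of_forall_le hm hsf hK hv hfund
  refine ⟨?_, ?_, ?_, ?_, ?_⟩
  · rintro rfl
    simpa using hv_eq 1 1 (by norm_num [IsPosPellPair]) fun _ _ h => ⟨h.1, h.2.1⟩
  · rintro rfl
    rw [hv_eq 2 2 (by norm_num [IsPosPellPair]) fun _ _ h => h.two_le_of_two]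
    push_cast
    ring
  · rintro rfl
    simpa using hv_eq 3 1 (by norm_num [IsPosPellPair])
      fun _ _ h => h.three_le_of_thirteen
  · rintro rfl
    rw [hv_eq 4 2 (by norm_num [IsPosPellPair]) fun _ _ h => h.four_le_of_three]
    push_cast
    ring
  · intro h2 h3 h5 h13
    obtain ⟨a, b, hab, hvab⟩ := exists_isPosPellPair_of_unit hm hsf hK v hv
    obtain ⟨ha, hmb⟩ := hab.four_le_and_thirteen_le_mul_sq hm hsf h2 h3 h5 h13
    exact hvab ▸ two_add_sqrt_three_lt ha hab.2.1 hmb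
end

section
/- Let L be a totally real number field of degree n and u a unit of its ring of integers with u ≠ ±1. Then the sum over all real embeddings v of L of (log|v(u)|)² is at least n·(log((1+√5)/2))². -/
/-!
For `x = v u`, the number `α = u - u⁻¹` satisfies `|v α| = 2 sinh t` with `t = |log |x||`.
With `c = log φ` one has `2 sinh c = 1` and `2 cosh c = √5`, and `log ∘ sinh` lies below the
parabola `t ↦ log (sinh c) + coth c · (t² - c²) / (2c)`, tangent to it at `c`; this gives
`c · log |v α| ≤ (√5 / 2) · ((log |v u|)² - c²)` at every real embedding `v`. Since `α` is a
nonzero algebraic integer, `∑ᵥ log |v α| = log |N(α)| ≥ 0`, and summing over `v` yields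
`∑ᵥ (log |v u|)² ≥ n c²`.
-/

open NumberField Finset

namespace Real

open goldenRatio

theorem log_sinh_sub_log_sinh_le {c t : ℝ} (hc : 0 < c) (ht : 0 < t) :
    2 * c * sinh c * (log (sinh t) - log (sinh c)) ≤ cosh c * (t ^ 2 - c ^ 2) := by
  set f : ℝ → ℝ := fun s => cosh c * s ^ 2 - 2 * c * sinh c * log (sinh s)
  have hf (s : ℝ) (hs : 0 < s) :
      HasDerivAt f (2 * (s * cosh c * sinh s - c * sinh c * cosh s) / sinh s) s := by
    have hsinh := (sinh_pos_iff.mpr hs).ne'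
    refine (((hasDerivAt_pow 2 s).const_mul (cosh c)).sub
      (((hasDerivAt_sinh s).log hsinh).const_mul (2 * c * sinh c))).congr_deriv ?_
    field_simp
    ring
  have hdiff (s : ℝ) (hs : s ∈ Set.Ioi 0) : DifferentiableAt ℝ f s := (hf s hs).differentiableAt
  -- The numerator of `f'` has the sign of `s - c`, because of `sinh (s - c)`.
  have hmin : IsMinOn f (Set.Ioi 0) c := by
    refine isMinOn_Ioi_of_deriv (hdiff c hc).continuousAt
      (fun s hs => (hdiff s hs.1).differentiableWithinAt)
      (fun s hs => (hdiff s (hc.trans hs)).differentiableWithinAt) ?_ ?_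
    · rintro s ⟨hs0, hsc⟩
      rw [(hf s hs0).deriv]
      have hsub : sinh (s - c) < 0 := sinh_neg_iff.mpr (by linarith)
      rw [sinh_sub] at hsub
      have := mul_lt_mul_of_pos_right hsc (mul_pos (sinh_pos_iff.mpr hc) (cosh_pos s))
      exact div_nonpos_of_nonpos_of_nonneg (by nlinarith) (sinh_pos_iff.mpr hs0).le
    · intro s hcs
      rw [Set.mem_Ioi] at hcs
      have hs0 : 0 < s := hc.trans hcs
      rw [(hf s hs0).deriv]
      have hsub : 0 < sinh (s - c) := sinh_pos_iff.mpr (by linarith)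
      rw [sinh_sub] at hsub
      have := mul_lt_mul_of_pos_right hcs (mul_pos (cosh_pos c) (sinh_pos_iff.mpr hs0))
      exact div_nonneg (by nlinarith) (sinh_pos_iff.mpr hs0).le
  have := hmin ht
  simp only [f, Set.mem_ofPred_eq] at this
  linarith

theorem sinh_log_goldenRatio : sinh (log φ) = 1 / 2 := by
  rw [sinh_log goldenRatio_pos, inv_goldenRatio]
  ring

theorem cosh_log_goldenRatio : cosh (log φ) = √5 / 2 := by
  rw [cosh_log goldenRatio_pos, inv_goldenRatio]
  ring

theorem abs_sub_inv_eq_two_mul_sinh {x : ℝ} (hx : x ≠ 0) :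
    |x - x⁻¹| = 2 * sinh |log (|x|)| := by
  rw [← abs_sinh, sinh_log (abs_pos.mpr hx), abs_div, abs_two, mul_div_cancel₀ _ two_ne_zero]
  rcases abs_choice x with h | h <;> rw [h]
  rw [inv_neg, neg_sub_neg, abs_sub_comm]

theorem log_goldenRatio_mul_log_abs_sub_inv_le {x : ℝ} (hx : x - x⁻¹ ≠ 0) :
    log φ * log |x - x⁻¹| ≤ √5 / 2 * (log |x| ^ 2 - log φ ^ 2) := by
  have hx0 : x ≠ 0 := by
    rintro rfl
    simp at hx
  have hsinh : 0 < 2 * sinh |log (|x|)| := abs_sub_inv_eq_two_mul_sinh hx0 ▸ abs_pos.mpr hx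
  have key := log_sinh_sub_log_sinh_le (log_pos one_lt_goldenRatio)
    (sinh_pos_iff.mp (by linarith) : 0 < |log (|x|)|)
  rw [sinh_log_goldenRatio, cosh_log_goldenRatio, sq_abs, one_div, log_inv] at key
  rw [abs_sub_inv_eq_two_mul_sinh hx0, log_mul two_ne_zero (by linarith)]
  linarith

end Real

theorem Units.val_sub_val_inv_ne_zero {R : Type*} [Ring R] [NoZeroDivisors R] {u : Rˣ}
    (h1 : u ≠ 1) (h2 : u ≠ -1) : (u : R) - ↑u⁻¹ ≠ 0 := by
  intro h
  have hsq : (u : R) * u = 1 := by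
    nth_rw 2 [sub_eq_zero.mp h]
    exact Units.mul_inv u
  rcases mul_self_eq_one_iff.mp hsq with h | h
  · exact h1 (Units.ext h)
  · exact h2 (Units.ext h)

namespace NumberField

variable {K : Type*} [Field K]

theorem prod_norm_embedding_eq_abs_norm [NumberField K] (x : K) :
    ∏ σ : K →+* ℂ, ‖σ x‖ = |(Algebra.norm ℚ x : ℝ)| := by
  rw [Fintype.prod_equiv (RingHom.equivRatAlgHom K ℂ) _ (fun f : K →ₐ[ℚ] ℂ => ‖f x‖)
      (fun σ => by simp [RingHom.equivRatAlgHom_apply]), ← norm_prod,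
    ← Algebra.norm_eq_prod_embeddings, eq_ratCast, ← Complex.ofReal_ratCast, Complex.norm_real,
    Real.norm_eq_abs]

theorem sum_log_norm_embedding_nonneg [NumberField K] {a : 𝓞 K} (ha : a ≠ 0) :
    0 ≤ ∑ σ : K →+* ℂ, Real.log ‖σ a‖ := by
  have ha' : (a : K) ≠ 0 := by exact_mod_cast ha
  rw [← Real.log_prod (fun σ _ => norm_ne_zero_iff.mpr ((map_ne_zero σ).mpr ha')),
    prod_norm_embedding_eq_abs_norm, ← Algebra.coe_norm_int]
  refine Real.log_nonneg ?_
  exact_mod_cast Int.one_le_abs (Algebra.norm_ne_zero_iff.mpr ha)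

namespace IsTotallyReal

theorem ofRealHom_comp_bijective [IsTotallyReal K] :
    Function.Bijective fun v : K →+* ℝ => Complex.ofRealHom.comp v := by
  refine ⟨fun v w hvw => RingHom.ext fun x => Complex.ofReal_injective (RingHom.congr_fun hvw x),
    fun σ => ?_⟩
  have hσ := complexEmbedding_isReal σ
  exact ⟨hσ.embedding, RingHom.ext hσ.coe_embedding_apply⟩

variable [NumberField K] [IsTotallyReal K]

theorem card_realEmbedding : Fintype.card (K →+* ℝ) = Module.finrank ℚ K := by
  rw [Fintype.card_of_bijective ofRealHom_comp_bijective, Embeddings.card K ℂ]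

theorem sum_log_abs_realEmbedding_nonneg {a : 𝓞 K} (ha : a ≠ 0) :
    0 ≤ ∑ v : K →+* ℝ, Real.log |v a| := by
  rw [Fintype.sum_bijective _ (ofRealHom_comp_bijective (K := K)) _ (fun σ => Real.log ‖σ a‖)
    (fun v => by simp)]
  exact sum_log_norm_embedding_nonneg ha

end IsTotallyReal

end NumberField

open Real goldenRatio

theorem pohst_theorem (L : Type*) [Field L] [NumberField L]
    (htr : ∀ v : InfinitePlace L, v.IsReal)
    (u : (𝓞 L)ˣ) (hu1 : u ≠ 1) (hu2 : u ≠ -1) :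
    ∑ v : L →+* ℝ, Real.log |v ((u : 𝓞 L) : L)| ^ 2 ≥
      (Module.finrank ℚ L : ℝ) * Real.log ((1 + Real.sqrt 5) / 2) ^ 2 := by
  have : IsTotallyReal L := ⟨htr⟩
  set α : 𝓞 L := u - ↑u⁻¹
  have hα : α ≠ 0 := Units.val_sub_val_inv_ne_zero hu1 hu2
  have hbound (v : L →+* ℝ) :
      log φ * log |v α| ≤ √5 / 2 * (log |v ((u : 𝓞 L) : L)| ^ 2 - log φ ^ 2) := by
    have hvα : v α = v ((u : 𝓞 L) : L) - (v ((u : 𝓞 L) : L))⁻¹ := by simp [α]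
    rw [hvα]
    exact log_goldenRatio_mul_log_abs_sub_inv_le (hvα ▸ (map_ne_zero v).mpr (by exact_mod_cast hα))
  have hsum := sum_le_sum (s := univ) fun v _ => hbound v
  rw [← mul_sum, ← mul_sum, sum_sub_distrib, sum_const, card_univ,
    IsTotallyReal.card_realEmbedding, nsmul_eq_mul] at hsum
  have hnorm := mul_nonneg (log_pos one_lt_goldenRatio).le
    (IsTotallyReal.sum_log_abs_realEmbedding_nonneg hα)
  exact sub_nonneg.mp
    ((mul_nonneg_iff_of_pos_left (by positivity : (0 : ℝ) < √5 / 2)).mp (hnorm.trans hsum))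
end

section
/- Let L = ℚ(√2, √5) with u₁ = (1+√5)/2, u₂ = 1+√2, u₃ = 3+√10. Then √(u₁u₂u₃) is a unit in the ring of integers of L. -/
open NumberField Polynomial

theorem sqrt_prod_units_is_unit
    (L : IntermediateField ℚ ℝ)
    (hL : L = IntermediateField.adjoin ℚ {Real.sqrt 2, Real.sqrt 5}) :
    ∃ v : (𝓞 L)ˣ,
      (((v : 𝓞 L) : L) : ℝ) =
        Real.sqrt (((1 + Real.sqrt 5) / 2) * (1 + Real.sqrt 2) * (3 + Real.sqrt 10)) := by
  have h2 : Real.sqrt 2 ∈ L := hL ▸ IntermediateField.subset_adjoin ℚ _ (by left; rfl)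
  have h5 : Real.sqrt 5 ∈ L := hL ▸ IntermediateField.subset_adjoin ℚ _ (by right; rfl)
  have r2 : (Real.sqrt 2)^2 = 2 := Real.sq_sqrt (by norm_num)
  have r5 : (Real.sqrt 5)^2 = 5 := Real.sq_sqrt (by norm_num)
  have r10 : Real.sqrt 10 = Real.sqrt 2 * Real.sqrt 5 := by
    rw [← Real.sqrt_mul (by norm_num)]; norm_num
  set a : L := ⟨Real.sqrt 2, h2⟩ with ha
  set b : L := ⟨Real.sqrt 5, h5⟩ with hb
  set x : L := (3 + a + b + a*b)/2 with hx
  set y : L := (1 - 2*a + b)/2 with hy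
  have hxv : (x : ℝ) = (3 + Real.sqrt 2 + Real.sqrt 5 + Real.sqrt 2 * Real.sqrt 5)/2 := by
    push_cast [hx]; rfl
  have hyv : (y : ℝ) = (1 - 2*Real.sqrt 2 + Real.sqrt 5)/2 := by
    push_cast [hy]; rfl
  -- x is an algebraic integer
  have hc2 : (((2:L)):ℝ) = 2 := by norm_cast
  have hc5 : (((5:L)):ℝ) = 5 := by norm_cast
  have hc6 : (((6:L)):ℝ) = 6 := by norm_cast
  have hxint : IsIntegral ℤ x := by
    refine ⟨X^4 - C 6 * X^3 + C 5 * X^2 + C 2 * X - 1, ?_, ?_⟩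
    · monicity!
    · simp only [eval₂_sub, eval₂_add, eval₂_mul, eval₂_pow, eval₂_X, eval₂_C, eval₂_one, eval₂_ofNat, map_ofNat]
      apply Subtype.ext
      push_cast [hxv, hc2, hc5, hc6]
      linear_combination ((-2) + (-15/4)*Real.sqrt 5 + (-1)*(Real.sqrt 5)^2 + (5/4)*(Real.sqrt 5)^3
          + (1/2)*(Real.sqrt 5)^4 + (1/4)*Real.sqrt 2*Real.sqrt 5 + (3/4)*Real.sqrt 2*(Real.sqrt 5)^2
          + (3/4)*Real.sqrt 2*(Real.sqrt 5)^3 + (1/4)*Real.sqrt 2*(Real.sqrt 5)^4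
          + (1/16)*(Real.sqrt 2)^2 + (1/4)*(Real.sqrt 2)^2*Real.sqrt 5 + (3/8)*(Real.sqrt 2)^2*(Real.sqrt 5)^2
          + (1/4)*(Real.sqrt 2)^2*(Real.sqrt 5)^3 + (1/16)*(Real.sqrt 2)^2*(Real.sqrt 5)^4) * r2
        + ((19/16) + (5/2)*Real.sqrt 5 + (17/16)*(Real.sqrt 5)^2 + Real.sqrt 2
          + (7/4)*Real.sqrt 2*Real.sqrt 5 + (3/4)*Real.sqrt 2*(Real.sqrt 5)^2) * r5
  have hyint : IsIntegral ℤ y := by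
    refine ⟨X^4 - C 2 * X^3 - C 5 * X^2 + C 6 * X - 1, ?_, ?_⟩
    · monicity!
    · simp only [eval₂_sub, eval₂_add, eval₂_mul, eval₂_pow, eval₂_X, eval₂_C, eval₂_one, eval₂_ofNat, map_ofNat]
      apply Subtype.ext
      push_cast [hyv, hc2, hc5, hc6]
      linear_combination ((-9/2) + (3/2)*(Real.sqrt 5)^2 + (-2)*Real.sqrt 2*Real.sqrt 5
          + (Real.sqrt 2)^2) * r2
        + ((27/16) + (1/16)*(Real.sqrt 5)^2 + (-1/2)*Real.sqrt 2*Real.sqrt 5) * r5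
  have hmul : x * y = 1 := by
    apply Subtype.ext
    push_cast [hxv, hyv]
    linear_combination ((-1/2) + (-1/2)*Real.sqrt 5) * r2 + ((1/4) + (1/4)*Real.sqrt 2) * r5
  refine ⟨⟨⟨x, hxint⟩, ⟨y, hyint⟩, by ext : 1; exact hmul, by ext : 1; rw [mul_comm] at hmul; exact hmul⟩, ?_⟩
  show (x : ℝ) = _
  rw [show ((1 + Real.sqrt 5) / 2) * (1 + Real.sqrt 2) * (3 + Real.sqrt 10)
      = ((3 + Real.sqrt 2 + Real.sqrt 5 + Real.sqrt 2 * Real.sqrt 5)/2)^2 by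
    rw [r10]
    linear_combination ((-1/4) + (1/4)*(Real.sqrt 5)^2) * r2 + (1/4) * r5]
  rw [Real.sqrt_sq (by positivity)]
  exact hxv
end
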